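/- arXiv:2411.18457 — 3 statements merged into one kernel-verified Lean document; each statement's English description precedes it below -/
import Mathlib

section
/- Let n ≥ 1 and κ ≥ 1 be integers. There is a constant C = C(n,κ) such that the following holds. Let g ∈ L¹(ℝⁿ) be supported in the closed ball B(c,ρ) with vanishing moments up to order κ−1 (∫ g(y) y^γ dy = 0 for |γ| ≤ κ−1). Let A > 0, λ > 0, and let φ : ℝⁿ → ℂ be κ times continuously differentiable with ‖∂^α φ‖_{L^∞} ≤ A λ^{|α|} for every multi-index |α| ≤ κ. Then for every u ∈ ℝⁿ with |u| ≥ λ, |∫_{ℝⁿ} e^{i u·y} φ(y) g(y) dy| ≤ C A (ρ |u|)^κ ‖g‖_{L¹}. -/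
/-!
Write `h y = exp (i ⟪u, y⟫) φ y`. By the Leibniz rule, every derivative of order `κ` of `h` is
bounded by `A (|u| + λ)^κ ≤ 2^κ A |u|^κ`. The Taylor polynomial of `h` of degree `κ - 1` at the
centre `c` is a polynomial of degree `< κ`, so it integrates to zero against `g` by the vanishing
moments; on the support of `g` the Taylor remainder is at most `2^κ A |u|^κ ρ^κ`.
-/

open MeasureTheory Finset

theorem MeasureTheory.Integrable.continuousOn_mul_of_support_subset {X R : Type*}
    [TopologicalSpace X] [MeasurableSpace X] [OpensMeasurableSpace X] [T2Space X] {μ : Measure X}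
    [NormedRing R] [SecondCountableTopologyEither X R] {q g : X → R} {K : Set X}
    (hK : IsCompact K) (hq : ContinuousOn q K) (hg : Integrable g μ)
    (hsupp : Function.support g ⊆ K) :
    Integrable (fun x => q x * g x) μ :=
  (integrableOn_iff_integrable_of_support_subset
    ((Function.support_mul_subset_right _ _).trans hsupp)).mp
    (hg.integrableOn.continuousOn_mul hq hK)

theorem ContinuousMultilinearMap.exists_totalDegree_le_apply_sub_eq_eval {n k : ℕ}
    (m : ContinuousMultilinearMap ℝ (fun _ : Fin k => EuclideanSpace ℝ (Fin n)) ℂ)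
    (c : EuclideanSpace ℝ (Fin n)) :
    ∃ p : MvPolynomial (Fin n) ℂ, p.totalDegree ≤ k ∧
      ∀ y, m (fun _ => y - c) = MvPolynomial.eval (fun i => (y i : ℂ)) p := by
  classical
  set e := EuclideanSpace.basisFun (Fin n) ℝ
  refine ⟨∑ r : Fin k → Fin n, MvPolynomial.C (m fun j => e (r j)) *
      ∏ j, (MvPolynomial.X (r j) - MvPolynomial.C (c (r j) : ℂ)), ?_, fun y => ?_⟩
  · refine (MvPolynomial.totalDegree_finsetSum _ _).trans (Finset.sup_le fun r _ => ?_)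
    refine (MvPolynomial.totalDegree_mul _ _).trans ?_
    rw [MvPolynomial.totalDegree_C, zero_add]
    refine (MvPolynomial.totalDegree_finsetProd _ _).trans ?_
    calc _ ≤ ∑ _j : Fin k, 1 := sum_le_sum fun j _ =>
            (MvPolynomial.totalDegree_sub_C_le _ _).trans (MvPolynomial.totalDegree_X _).le
      _ = k := by simp
  · conv_lhs => rw [← e.sum_repr (y - c)]
    rw [m.map_sum]
    simp [m.map_smul_univ, e, mul_comm]

section Moments

variable {n d : ℕ} {g : EuclideanSpace ℝ (Fin n) → ℂ} {K : Set (EuclideanSpace ℝ (Fin n))}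

theorem integral_eval_mul_eq_zero_of_totalDegree_le (hK : IsCompact K) (hg : Integrable g)
    (hsupp : Function.support g ⊆ K)
    (hmom : ∀ γ : Fin n → ℕ, ∑ i, γ i ≤ d → ∫ y, g y * ∏ i, (y i : ℂ) ^ γ i = 0)
    {p : MvPolynomial (Fin n) ℂ} (hp : p.totalDegree ≤ d) :
    ∫ y, MvPolynomial.eval (fun i => (y i : ℂ)) p * g y = 0 := by
  have hcoord : Continuous fun (y : EuclideanSpace ℝ (Fin n)) (i : Fin n) => (y i : ℂ) :=
    continuous_pi fun i => Complex.continuous_ofReal.comp (EuclideanSpace.proj i).continuous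
  have hint : ∀ q : MvPolynomial (Fin n) ℂ,
      Integrable fun y => MvPolynomial.eval (fun i => (y i : ℂ)) q * g y := fun q =>
    hg.continuousOn_mul_of_support_subset hK
      ((MvPolynomial.continuous_eval q).comp hcoord).continuousOn hsupp
  conv_lhs => rw [p.as_sum]
  simp only [map_sum, sum_mul]
  rw [integral_finsetSum _ fun s _ => hint _]
  refine sum_eq_zero fun s hs => ?_
  have hdeg : ∑ i, s i ≤ d := by
    simpa [Finsupp.sum_fintype] using (MvPolynomial.le_totalDegree hs).trans hp
  simp only [MvPolynomial.eval_monomial, Finsupp.prod_fintype _ _ (fun _ => pow_zero _),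
    mul_assoc, integral_const_mul]
  simp_rw [mul_comm (∏ i, _) (g _)]
  rw [hmom s hdeg, mul_zero]

theorem integral_multilinear_apply_sub_mul_eq_zero {k : ℕ} (hK : IsCompact K)
    (hg : Integrable g) (hsupp : Function.support g ⊆ K)
    (hmom : ∀ γ : Fin n → ℕ, ∑ i, γ i ≤ d → ∫ y, g y * ∏ i, (y i : ℂ) ^ γ i = 0)
    (hk : k ≤ d) (m : ContinuousMultilinearMap ℝ (fun _ : Fin k => EuclideanSpace ℝ (Fin n)) ℂ)
    (c : EuclideanSpace ℝ (Fin n)) :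
    ∫ y, m (fun _ => y - c) * g y = 0 := by
  obtain ⟨p, hp, hmp⟩ := m.exists_totalDegree_le_apply_sub_eq_eval c
  simp_rw [hmp]
  exact integral_eval_mul_eq_zero_of_totalDegree_le hK hg hsupp hmom (hp.trans hk)

end Moments

theorem iteratedDeriv_comp_add_smul {E F : Type*} [NormedAddCommGroup E] [NormedSpace ℝ E]
    [NormedAddCommGroup F] [NormedSpace ℝ F] {N : ℕ} {f : E → F} (hf : ContDiff ℝ N f)
    (c v : E) {k : ℕ} (hk : k ≤ N) (t : ℝ) :
    iteratedDeriv k (fun s : ℝ => f (c + s • v)) t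
      = iteratedFDeriv ℝ k f (c + t • v) (fun _ => v) := by
  have hL := (ContinuousLinearMap.smulRight (1 : ℝ →L[ℝ] ℝ) v).iteratedFDeriv_comp_right
    (f := fun z => f (c + z)) (hf.comp (contDiff_const.add contDiff_id)) t (by exact_mod_cast hk)
  rw [iteratedDeriv_eq_iteratedFDeriv]
  simp_all [Function.comp_def, iteratedFDeriv_comp_add_left]

theorem norm_sub_sum_iteratedFDeriv_le {E F : Type*} [NormedAddCommGroup E] [NormedSpace ℝ E]
    [NormedAddCommGroup F] [NormedSpace ℝ F] {N : ℕ} {f : E → F} (hf : ContDiff ℝ N f) {M : ℝ}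
    (hM : ∀ z, ‖iteratedFDeriv ℝ N f z‖ ≤ M) (c y : E) :
    ‖f y - ∑ k ∈ range N, (k.factorial : ℝ)⁻¹ • iteratedFDeriv ℝ k f c (fun _ => y - c)‖
      ≤ M * ‖y - c‖ ^ N := by
  cases N with
  | zero => simpa using hM y
  | succ N =>
    set ℓ : ℝ → F := fun t => f (c + t • (y - c))
    have hℓ : ContDiff ℝ (N + 1) ℓ :=
      hf.comp (contDiff_const.add (contDiff_id.smul contDiff_const))
    have hderiv : ∀ k ≤ N + 1, ∀ t ∈ Set.Icc (0 : ℝ) 1, iteratedDerivWithin k ℓ (Set.Icc 0 1) t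
        = iteratedFDeriv ℝ k f (c + t • (y - c)) (fun _ => y - c) := fun k hk t ht => by
      rw [iteratedDerivWithin_eq_iteratedDeriv (uniqueDiffOn_Icc zero_lt_one)
        (hℓ.contDiffAt.of_le (by exact_mod_cast hk)) ht, iteratedDeriv_comp_add_smul hf c _ hk]
    have hbound : ∀ t ∈ Set.Icc (0 : ℝ) 1,
        ‖iteratedDerivWithin (N + 1) ℓ (Set.Icc 0 1) t‖ ≤ M * ‖y - c‖ ^ (N + 1) := fun t ht => by
      rw [hderiv _ le_rfl t ht]
      refine (ContinuousMultilinearMap.le_mul_prod_of_opNorm_le_of_le (hM _) fun _ => le_rfl).trans ?_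
      simp
    have htaylor := taylor_mean_remainder_bound zero_le_one hℓ.contDiffOn
      (Set.right_mem_Icc.mpr zero_le_one) hbound
    have hpoly : taylorWithinEval ℓ N (Set.Icc 0 1) 0 1
        = ∑ k ∈ range (N + 1), (k.factorial : ℝ)⁻¹ • iteratedFDeriv ℝ k f c (fun _ => y - c) := by
      rw [taylor_within_apply]
      refine sum_congr rfl fun k hk => ?_
      rw [hderiv k (mem_range.mp hk).le 0 (Set.left_mem_Icc.mpr zero_le_one)]
      simp
    have hM0 : 0 ≤ M := (norm_nonneg _).trans (hM c)
    simp only [ℓ, hpoly, one_smul, add_sub_cancel, sub_zero, one_pow, mul_one] at htaylor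
    exact htaylor.trans (div_le_self (by positivity) (Nat.one_le_cast.mpr N.factorial_pos))

theorem iteratedDeriv_cexp_I_mul (j : ℕ) :
    iteratedDeriv j (fun t : ℝ => Complex.exp (Complex.I * t))
      = fun t : ℝ => Complex.I ^ j * Complex.exp (Complex.I * t) := by
  induction j with
  | zero => simp
  | succ j ih =>
    rw [iteratedDeriv_succ, ih]
    funext t
    have h : HasDerivAt (fun t : ℝ => Complex.I * t) Complex.I t := by
      simpa using Complex.ofRealCLM.hasDerivAt.const_mul Complex.I
    rw [(h.cexp.const_mul _).deriv]
    ring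

theorem contDiff_cexp_I_mul_inner {E : Type*} [NormedAddCommGroup E] [InnerProductSpace ℝ E]
    (u : E) {n : WithTop ℕ∞} :
    ContDiff ℝ n (fun y : E => Complex.exp (Complex.I * ((inner ℝ u y : ℝ) : ℂ))) :=
  Complex.contDiff_exp.comp
    (contDiff_const.mul (Complex.ofRealCLM.contDiff.comp (contDiff_const.inner ℝ contDiff_id)))

theorem norm_iteratedFDeriv_cexp_I_mul_inner_le {E : Type*} [NormedAddCommGroup E]
    [InnerProductSpace ℝ E] (u : E) (j : ℕ) (y : E) :
    ‖iteratedFDeriv ℝ j (fun y : E => Complex.exp (Complex.I * ((inner ℝ u y : ℝ) : ℂ))) y‖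
      ≤ ‖u‖ ^ j := by
  have hw : ContDiff ℝ j (fun t : ℝ => Complex.exp (Complex.I * t)) :=
    Complex.contDiff_exp.comp (contDiff_const.mul Complex.ofRealCLM.contDiff)
  have hcomp := (innerSL ℝ u).iteratedFDeriv_comp_right hw y le_rfl
  simp only [Function.comp_def, innerSL_apply_apply] at hcomp
  rw [hcomp]
  calc _ ≤ ‖iteratedFDeriv ℝ j (fun t : ℝ => Complex.exp (Complex.I * t)) (inner ℝ u y)‖
        * ∏ _ : Fin j, ‖innerSL ℝ u‖ :=
        ContinuousMultilinearMap.norm_compContinuousLinearMap_le _ _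
    _ = ‖u‖ ^ j := by
        simp [norm_iteratedFDeriv_eq_norm_iteratedDeriv, iteratedDeriv_cexp_I_mul,
          Complex.norm_exp]

theorem norm_iteratedFDeriv_mul_le_of_le {E A : Type*} [NormedAddCommGroup E] [NormedSpace ℝ E]
    [NormedRing A] [NormedAlgebra ℝ A] {f g : E → A} {N : ℕ} (hf : ContDiff ℝ N f)
    (hg : ContDiff ℝ N g) {x : E} {B C a b : ℝ}
    {k : ℕ} (hk : k ≤ N) (hfx : ∀ i ≤ k, ‖iteratedFDeriv ℝ i f x‖ ≤ B * a ^ i)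
    (hgx : ∀ i ≤ k, ‖iteratedFDeriv ℝ i g x‖ ≤ C * b ^ i) :
    ‖iteratedFDeriv ℝ k (fun y => f y * g y) x‖ ≤ B * C * (a + b) ^ k := by
  refine (norm_iteratedFDeriv_mul_le hf hg x (by exact_mod_cast hk)).trans ?_
  rw [add_pow, mul_sum]
  refine sum_le_sum fun i hi => ?_
  have hik : i ≤ k := Nat.lt_succ_iff.mp (mem_range.mp hi)
  have hfi := hfx i hik
  calc _ ≤ (k.choose i : ℝ) * (B * a ^ i) * (C * b ^ (k - i)) := by
        have hB : 0 ≤ B * a ^ i := (norm_nonneg _).trans hfi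
        gcongr
        exact hgx _ (k.sub_le i)
    _ = _ := by ring

theorem norm_integral_mul_le_of_moments {n κ : ℕ} {g : EuclideanSpace ℝ (Fin n) → ℂ}
    {c : EuclideanSpace ℝ (Fin n)} {ρ : ℝ} (hg : Integrable g)
    (hsupp : Function.support g ⊆ Metric.closedBall c ρ)
    (hmom : ∀ γ : Fin n → ℕ, ∑ i, γ i ≤ κ - 1 → ∫ y, g y * ∏ i, (y i : ℂ) ^ γ i = 0)
    {h : EuclideanSpace ℝ (Fin n) → ℂ} (hh : ContDiff ℝ κ h) {M : ℝ}
    (hM : ∀ z, ‖iteratedFDeriv ℝ κ h z‖ ≤ M) :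
    ‖∫ y, h y * g y‖ ≤ M * ρ ^ κ * ∫ y, ‖g y‖ := by
  set P : EuclideanSpace ℝ (Fin n) → ℂ := fun y =>
    ∑ k ∈ range κ, (k.factorial : ℝ)⁻¹ • iteratedFDeriv ℝ k h c (fun _ => y - c)
  have hK := isCompact_closedBall c ρ
  have hdiag : ∀ k, Continuous fun y => iteratedFDeriv ℝ k h c (fun _ => y - c) := fun k =>
    (iteratedFDeriv ℝ k h c).cont.comp (continuous_pi fun _ => continuous_id.sub continuous_const)
  have hPg : ∫ y, P y * g y = 0 := by
    simp only [P, sum_mul, smul_mul_assoc]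
    rw [integral_finsetSum _ fun k _ =>
      (hg.continuousOn_mul_of_support_subset hK (hdiag k).continuousOn hsupp).fun_smul _]
    refine sum_eq_zero fun k hk => ?_
    rw [integral_smul, integral_multilinear_apply_sub_mul_eq_zero hK hg hsupp hmom
      (by have := mem_range.mp hk; omega), smul_zero]
  have hPcont : Continuous P := continuous_finsetSum _ fun k _ => (hdiag k).fun_const_smul _
  have hPint : Integrable fun y => P y * g y :=
    hg.continuousOn_mul_of_support_subset hK hPcont.continuousOn hsupp
  have hhint : Integrable fun y => h y * g y :=
    hg.continuousOn_mul_of_support_subset hK hh.continuous.continuousOn hsupp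
  have hM0 : 0 ≤ M := (norm_nonneg _).trans (hM c)
  calc ‖∫ y, h y * g y‖ = ‖∫ y, (h y - P y) * g y‖ := by
        simp_rw [sub_mul]; rw [integral_sub hhint hPint, hPg, sub_zero]
    _ ≤ ∫ y, M * ρ ^ κ * ‖g y‖ := by
        refine norm_integral_le_of_norm_le (hg.norm.const_mul _)
          (Filter.Eventually.of_forall fun y => ?_)
        rw [norm_mul]
        by_cases hy : g y = 0
        · simp [hy]
        have hyc : ‖y - c‖ ≤ ρ := mem_closedBall_iff_norm.mp (hsupp hy)
        have := (norm_sub_sum_iteratedFDeriv_le hh hM c y).trans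
          (mul_le_mul_of_nonneg_left (pow_le_pow_left₀ (norm_nonneg _) hyc κ) hM0)
        exact mul_le_mul_of_nonneg_right this (norm_nonneg _)
    _ = M * ρ ^ κ * ∫ y, ‖g y‖ := integral_const_mul _ _

theorem oscillatory_moment_estimate_general (n κ : ℕ) :
    ∃ C : ℝ, 0 < C ∧
      ∀ (g : EuclideanSpace ℝ (Fin n) → ℂ) (c : EuclideanSpace ℝ (Fin n)) (ρ : ℝ),
        0 ≤ ρ → Integrable g →
        Function.support g ⊆ Metric.closedBall c ρ →
        (∀ γ : Fin n → ℕ, (∑ i, γ i) ≤ κ - 1 →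
          ∫ y, g y * ∏ i, (y i : ℂ) ^ (γ i) = 0) →
        ∀ (A lam : ℝ), 0 < A → 0 < lam →
        ∀ φ : EuclideanSpace ℝ (Fin n) → ℂ, ContDiff ℝ κ φ →
        (∀ j ≤ κ, ∀ y, ‖iteratedFDeriv ℝ j φ y‖ ≤ A * lam ^ j) →
        ∀ u : EuclideanSpace ℝ (Fin n), lam ≤ ‖u‖ →
        ‖∫ y, Complex.exp (Complex.I * ((inner ℝ u y : ℝ) : ℂ)) * φ y * g y‖
          ≤ C * A * (ρ * ‖u‖) ^ κ * ∫ y, ‖g y‖ := by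
  refine ⟨2 ^ κ, by positivity, fun g c ρ _ hg hsupp hmom A lam hA hlam φ hφ hφb u hu => ?_⟩
  have hbound : ∀ z, ‖iteratedFDeriv ℝ κ
      (fun y => Complex.exp (Complex.I * ((inner ℝ u y : ℝ) : ℂ)) * φ y) z‖
        ≤ A * (2 * ‖u‖) ^ κ := fun z => calc
    _ ≤ 1 * A * (‖u‖ + lam) ^ κ :=
        norm_iteratedFDeriv_mul_le_of_le (contDiff_cexp_I_mul_inner u) hφ le_rfl
          (fun i _ => (norm_iteratedFDeriv_cexp_I_mul_inner_le u i z).trans_eq (one_mul _).symm)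
          (fun i hi => hφb i hi z)
    _ ≤ A * (2 * ‖u‖) ^ κ := by
        rw [one_mul, two_mul]
        gcongr
  calc _ ≤ A * (2 * ‖u‖) ^ κ * ρ ^ κ * ∫ y, ‖g y‖ :=
        norm_integral_mul_le_of_moments hg hsupp hmom ((contDiff_cexp_I_mul_inner u).mul hφ) hbound
    _ = _ := by ring

theorem oscillatory_moment_estimate (n κ : ℕ) (hn : 1 ≤ n) (hκ : 1 ≤ κ) :
    ∃ C : ℝ, 0 < C ∧
      ∀ (g : EuclideanSpace ℝ (Fin n) → ℂ) (c : EuclideanSpace ℝ (Fin n)) (ρ : ℝ),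
        0 ≤ ρ → Integrable g →
        Function.support g ⊆ Metric.closedBall c ρ →
        (∀ γ : Fin n → ℕ, (∑ i, γ i) ≤ κ - 1 →
          ∫ y, g y * ∏ i, (y i : ℂ) ^ (γ i) = 0) →
        ∀ (A lam : ℝ), 0 < A → 0 < lam →
        ∀ φ : EuclideanSpace ℝ (Fin n) → ℂ, ContDiff ℝ κ φ →
        (∀ j ≤ κ, ∀ y, ‖iteratedFDeriv ℝ j φ y‖ ≤ A * lam ^ j) →
        ∀ u : EuclideanSpace ℝ (Fin n), lam ≤ ‖u‖ →
        ‖∫ y, Complex.exp (Complex.I * ((inner ℝ u y : ℝ) : ℂ)) * φ y * g y‖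
          ≤ C * A * (ρ * ‖u‖) ^ κ * ∫ y, ‖g y‖ :=
  oscillatory_moment_estimate_general n κ
end

section
/- Let μ ≥ 0 and λ ≥ μ + 3 be real numbers. There is a constant C = C(λ, μ) such that for all dyadic squares I and J in ℝ², Σ_K 2^{-λ · dtree(I,K)} · 2^{-λ · dtree(K,J)} ≤ C · 2^{-μ · dtree(I,J)}, where the sum runs over all dyadic squares K in ℝ². -/
/-!
STATEMENT 14: Schur-type sum (Lemma `comp`): for `μ ≥ 0` and `λ ≥ μ + 3`
there is `C = C(λ,μ)` such that for all dyadic squares `I, J` in ℝ²,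
`Σ_K 2^{-λ·dtree(I,K)} 2^{-λ·dtree(K,J)} ≤ C · 2^{-μ·dtree(I,J)}`,
the sum being over all dyadic squares `K`.

The summand `2^{-λ·d}` is encoded by the weight `treeWeight λ d` valued in
`ℝ≥0∞` (with the convention `2^{-λ·⊤} = 0`), so that the `tsum` is always
defined.
-/

/-- A dyadic square in ℝ²: level `k : ℤ` and position `m : Fin 2 → ℤ`,
representing the set `2^{-k}(m + [0,1)²)`. -/
abbrev DyadicSq : Type := ℤ × (Fin 2 → ℤ)

/-- The dyadic parent: the unique dyadic square of the next coarser level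
containing the given square. -/
def parentSq (I : DyadicSq) : DyadicSq :=
  (I.1 - 1, fun i => Int.ediv (I.2 i) 2)

/-- Adjacency in the dyadic tree: one square is the parent of the other. -/
def adjSq (I J : DyadicSq) : Prop := parentSq I = J ∨ parentSq J = I

/-- There is a path of length `d` from `I` to `J` in the dyadic tree. -/
def chainSq (d : ℕ) (I J : DyadicSq) : Prop :=
  ∃ c : ℕ → DyadicSq, c 0 = I ∧ c d = J ∧ ∀ k < d, adjSq (c k) (c (k + 1))

/-- The tree distance: the length of the shortest path joining `I` and `J`
in the dyadic tree (`⊤` if there is none). -/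
noncomputable def dtree (I J : DyadicSq) : ℕ∞ :=
  ⨅ (n : ℕ) (_ : chainSq n I J), (n : ℕ∞)

/-- The weight `2^{-λ·d}`, with the convention that it vanishes when
`d = ⊤`. -/
noncomputable def treeWeight (lam : ℝ) (d : ℕ∞) : ENNReal :=
  if d = ⊤ then 0 else ENNReal.ofReal ((2 : ℝ) ^ (-(lam * (d.toNat : ℝ))))

namespace SchurAux

/-- An elementary move in the dyadic tree: `none` = go to the parent,
`some b` = go to the child selected by the bits `b`. -/
abbrev Move : Type := Option (Fin 2 → Fin 2)

def move (I : DyadicSq) : Move → DyadicSq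
  | none => parentSq I
  | some b => (I.1 + 1, fun j => 2 * I.2 j + ((b j : ℕ) : ℤ))

lemma adj_exists_move {J K : DyadicSq} (h : adjSq J K) : ∃ a : Move, move J a = K := by
  rcases h with h | h
  · exact ⟨none, h⟩
  · refine ⟨some (fun j => if K.2 j % 2 = 0 then 0 else 1), ?_⟩
    have h1 : K.1 - 1 = J.1 := congrArg Prod.fst h
    have h2 : ∀ j, K.2 j / 2 = J.2 j := fun j => congrFun (congrArg Prod.snd h) j
    have : (J.1 + 1, fun j => 2 * J.2 j +
        (((if K.2 j % 2 = 0 then (0 : Fin 2) else 1) : Fin 2).val : ℤ)) = (K.1, K.2) := by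
      refine Prod.ext ?_ ?_
      · simp only; omega
      · funext j
        have hdm := Int.mul_ediv_add_emod (K.2 j) 2
        have hm : K.2 j % 2 = 0 ∨ K.2 j % 2 = 1 := Int.emod_two_eq_zero_or_one (K.2 j)
        have h2j := h2 j
        rcases hm with hm | hm <;> simp only [hm] <;> norm_num <;> omega
    simpa [move] using this

lemma chainSq_trans {m n : ℕ} {I K J : DyadicSq} (h1 : chainSq m I K) (h2 : chainSq n K J) :
    chainSq (m + n) I J := by
  obtain ⟨c1, hc10, hc1m, hadj1⟩ := h1
  obtain ⟨c2, hc20, hc2n, hadj2⟩ := h2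
  refine ⟨fun i => if i < m then c1 i else c2 (i - m), ?_, ?_, ?_⟩
  · by_cases h : 0 < m
    · simp [h, hc10]
    · have hm : m = 0 := by omega
      subst hm
      have : c2 0 = I := by rw [hc20, ← hc1m, hc10]
      simpa using this
  · have : ¬ (m + n < m) := by omega
    simp [this, hc2n]
  · intro k hk
    by_cases hk1 : k + 1 < m
    · have hkm : k < m := by omega
      simp only [if_pos hkm, if_pos hk1]
      exact hadj1 k hkm
    · by_cases hkm : k < m
      · have hk1m : k + 1 = m := by omega
        have : c2 (k + 1 - m) = c1 (k + 1) := by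
          rw [hk1m]; simp [hc20, ← hc1m]
        simp only [if_pos hkm, if_neg hk1, this]
        exact hadj1 k hkm
      · have h1' : ¬ k < m := hkm
        simp only [if_neg h1', if_neg hk1]
        have : k + 1 - m = (k - m) + 1 := by omega
        rw [this]
        exact hadj2 (k - m) (by omega)

lemma chain_exists_list {n : ℕ} {I K : DyadicSq} (h : chainSq n I K) :
    ∃ l : List Move, l.length = n ∧ l.foldl move I = K := by
  induction n generalizing K with
  | zero =>
    obtain ⟨c, h0, hn, _⟩ := h
    exact ⟨[], rfl, by simp [← h0, ← hn]⟩
  | succ n ih =>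
    obtain ⟨c, h0, hn, hadj⟩ := h
    obtain ⟨l, hl, hf⟩ := ih ⟨c, h0, rfl, fun k hk => hadj k (by omega)⟩
    obtain ⟨a, ha⟩ := adj_exists_move (hadj n (by omega))
    exact ⟨l ++ [a], by simp [hl], by simp [List.foldl_append, hf, ha, hn]⟩

lemma dtree_le_of_chain {n : ℕ} {I K : DyadicSq} (h : chainSq n I K) : dtree I K ≤ n := by
  exact iInf₂_le n h

lemma exists_chain {I K : DyadicSq} (h : dtree I K ≠ ⊤) : ∃ n, chainSq n I K := by
  by_contra hc
  push_neg at hc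
  apply h
  rw [dtree, iInf_eq_top]
  intro n
  rw [iInf_eq_top]
  intro hn
  exact absurd hn (hc n)

lemma dtree_spec {I K : DyadicSq} (h : dtree I K ≠ ⊤) :
    ∃ n : ℕ, chainSq n I K ∧ (n : ℕ∞) ≤ dtree I K := by
  have hne : {n | chainSq n I K}.Nonempty := exists_chain h
  refine ⟨sInf {n | chainSq n I K}, Nat.sInf_mem hne, ?_⟩
  rw [dtree]
  exact le_iInf₂ fun n hn => Nat.cast_le.mpr (Nat.sInf_le hn)

lemma dtree_triangle (I K J : DyadicSq) : dtree I J ≤ dtree I K + dtree K J := by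
  rcases eq_or_ne (dtree I K) ⊤ with h1 | h1
  · simp [h1]
  rcases eq_or_ne (dtree K J) ⊤ with h2 | h2
  · simp [h2]
  obtain ⟨m, hm, hmle⟩ := dtree_spec h1
  obtain ⟨n, hn, hnle⟩ := dtree_spec h2
  calc dtree I J ≤ ((m + n : ℕ) : ℕ∞) := dtree_le_of_chain (chainSq_trans hm hn)
    _ = (m : ℕ∞) + n := by push_cast; rfl
    _ ≤ dtree I K + dtree K J := add_le_add hmle hnle

lemma treeWeight_le_one {lam : ℝ} (h : 0 ≤ lam) (d : ℕ∞) : treeWeight lam d ≤ 1 := by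
  rcases eq_or_ne d ⊤ with hd | hd
  · simp [treeWeight, hd]
  rw [treeWeight, if_neg hd]
  rw [show (1 : ENNReal) = ENNReal.ofReal 1 by simp]
  apply ENNReal.ofReal_le_ofReal
  apply Real.rpow_le_one_of_one_le_of_nonpos one_le_two
  have : (0 : ℝ) ≤ (d.toNat : ℝ) := by positivity
  nlinarith

lemma treeWeight_anti {lam : ℝ} (h : 0 ≤ lam) {d d' : ℕ∞} (hd : d ≤ d') :
    treeWeight lam d' ≤ treeWeight lam d := by
  rcases eq_or_ne d' ⊤ with h' | h'
  · simp [treeWeight, h']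
  have hdne : d ≠ ⊤ := fun hc => h' (top_le_iff.mp (hc ▸ hd))
  rw [treeWeight, if_neg h', treeWeight, if_neg hdne]
  apply ENNReal.ofReal_le_ofReal
  apply Real.rpow_le_rpow_of_exponent_le one_le_two
  have hle : (d.toNat : ℝ) ≤ (d'.toNat : ℝ) := by
    exact_mod_cast ENat.toNat_le_toNat hd h'
  nlinarith

lemma treeWeight_mono_lam {lam lam' : ℝ} (h : lam ≤ lam') (d : ℕ∞) :
    treeWeight lam' d ≤ treeWeight lam d := by
  rcases eq_or_ne d ⊤ with hd | hd
  · simp [treeWeight, hd]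
  rw [treeWeight, if_neg hd, treeWeight, if_neg hd]
  apply ENNReal.ofReal_le_ofReal
  apply Real.rpow_le_rpow_of_exponent_le one_le_two
  have : (0 : ℝ) ≤ (d.toNat : ℝ) := by positivity
  nlinarith

lemma treeWeight_split (lam mu : ℝ) (d : ℕ∞) :
    treeWeight lam d = treeWeight mu d * treeWeight (lam - mu) d := by
  rcases eq_or_ne d ⊤ with hd | hd
  · simp [treeWeight, hd]
  rw [treeWeight, if_neg hd, treeWeight, if_neg hd, treeWeight, if_neg hd]
  rw [← ENNReal.ofReal_mul (by positivity), ← Real.rpow_add two_pos]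
  congr 1
  ring

lemma treeWeight_add (lam : ℝ) (a b : ℕ∞) :
    treeWeight lam (a + b) = treeWeight lam a * treeWeight lam b := by
  rcases eq_or_ne a ⊤ with ha | ha
  · simp [treeWeight, ha]
  rcases eq_or_ne b ⊤ with hb | hb
  · simp [treeWeight, hb]
  have hab : a + b ≠ ⊤ := WithTop.add_ne_top.mpr ⟨ha, hb⟩
  rw [treeWeight, if_neg hab, treeWeight, if_neg ha, treeWeight, if_neg hb]
  rw [← ENNReal.ofReal_mul (by positivity), ← Real.rpow_add two_pos]
  congr 1
  have htn : (a + b).toNat = a.toNat + b.toNat := by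
    lift a to ℕ using ha
    lift b to ℕ using hb
    rw [← Nat.cast_add, ENat.toNat_coe, ENat.toNat_coe, ENat.toNat_coe]
  rw [htn]
  push_cast
  ring

lemma treeWeight_coe_three (n : ℕ) :
    treeWeight 3 (n : ℕ∞) = ENNReal.ofReal (1/8 : ℝ) ^ n := by
  rw [treeWeight, if_neg (by simp), ENat.toNat_coe]
  have h8 : (2 : ℝ) ^ (-(3 : ℝ)) = 1/8 := by
    rw [show (-3 : ℝ) = ((-3 : ℤ) : ℝ) by norm_num, Real.rpow_intCast]
    norm_num
  rw [show -((3:ℝ) * (n : ℝ)) = (-(3:ℝ)) * (n : ℝ) by ring,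
    Real.rpow_mul (by norm_num : (0:ℝ) ≤ 2), Real.rpow_natCast, h8]
  exact ENNReal.ofReal_pow (by norm_num) n

/-- The fundamental counting bound: the sum of `2^{-3 dtree(I,K)}` over all `K`
is at most `3`, because the squares at tree distance `n` from `I` are reached by
paths of `n` moves, of which there are only `5^n`. -/
lemma sum_W3_le (I : DyadicSq) :
    ∑' K : DyadicSq, treeWeight 3 (dtree I K) ≤ ENNReal.ofReal 3 := by
  set S : Set DyadicSq := {K : DyadicSq | dtree I K ≠ ⊤} with hS
  have hsupp : Function.support (fun K => treeWeight 3 (dtree I K)) ⊆ S := by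
    intro K hK
    simp only [Function.mem_support] at hK
    intro htop
    exact hK (by simp [treeWeight, htop])
  rw [← tsum_subtype_eq_of_support_subset hsupp]
  have hι : ∀ K : S, ∃ σ : Σ n : ℕ, Fin n → Move,
      (List.ofFn σ.2).foldl move I = (K : DyadicSq) ∧
      treeWeight 3 (dtree I (K : DyadicSq)) ≤ treeWeight 3 ((σ.1 : ℕ∞)) := by
    rintro ⟨K, hK⟩
    obtain ⟨n, hc, hle⟩ := dtree_spec hK
    obtain ⟨l, hl, hf⟩ := chain_exists_list hc
    refine ⟨⟨l.length, l.get⟩, by simpa [List.ofFn_get] using hf, ?_⟩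
    apply treeWeight_anti (by norm_num : (0:ℝ) ≤ 3)
    show ((l.length : ℕ∞)) ≤ dtree I K
    exact hl.symm ▸ hle
  choose ι hι1 hι2 using hι
  have hinj : Function.Injective ι := by
    intro K K' h
    apply Subtype.ext
    rw [← hι1 K, ← hι1 K', h]
  calc ∑' K : S, treeWeight 3 (dtree I (K : DyadicSq))
      ≤ ∑' K : S, treeWeight 3 (((ι K).1 : ℕ∞)) := ENNReal.tsum_le_tsum hι2
    _ ≤ ∑' σ : Σ n : ℕ, Fin n → Move, treeWeight 3 ((σ.1 : ℕ∞)) :=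
        ENNReal.tsum_comp_le_tsum_of_injective hinj _
    _ = ∑' n : ℕ, ∑' _ : Fin n → Move, treeWeight 3 ((n : ℕ∞)) :=
        ENNReal.tsum_sigma' _
    _ = ∑' n : ℕ, (5 : ENNReal) ^ n * treeWeight 3 ((n : ℕ∞)) := by
        refine tsum_congr fun n => ?_
        rw [tsum_fintype, Finset.sum_const, Finset.card_univ, nsmul_eq_mul]
        congr 1
        have : Fintype.card (Fin n → Move) = 5 ^ n := by
          rw [Fintype.card_fun]
          norm_num [Fintype.card_option, Fintype.card_fun]
        rw [this]
        push_cast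
        rfl
    _ = ∑' n : ℕ, (ENNReal.ofReal (5/8 : ℝ)) ^ n := by
        refine tsum_congr fun n => ?_
        rw [treeWeight_coe_three, ← mul_pow]
        congr 1
        rw [show (5 : ENNReal) = ENNReal.ofReal 5 by norm_num,
          ← ENNReal.ofReal_mul (by norm_num)]
        norm_num
    _ = (1 - ENNReal.ofReal (5/8 : ℝ))⁻¹ := ENNReal.tsum_geometric _
    _ ≤ ENNReal.ofReal 3 := by
        have h1 : (1 : ENNReal) - ENNReal.ofReal (5/8 : ℝ) = ENNReal.ofReal (3/8 : ℝ) := by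
          rw [show (3/8 : ℝ) = 1 - 5/8 by norm_num, ENNReal.ofReal_sub _ (by norm_num)]
          norm_num
        rw [h1, ← ENNReal.ofReal_inv_of_pos (by norm_num)]
        apply ENNReal.ofReal_le_ofReal
        norm_num

end SchurAux

theorem tree_weight_schur (mu lam : ℝ) (hmu : 0 ≤ mu) (hlam : mu + 3 ≤ lam) :
    ∃ C : ℝ, 0 < C ∧ ∀ I J : DyadicSq,
      ∑' K : DyadicSq, treeWeight lam (dtree I K) * treeWeight lam (dtree K J)
        ≤ ENNReal.ofReal C * treeWeight mu (dtree I J) := by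
  refine ⟨3, by norm_num, fun I J => ?_⟩
  have key : ∀ K : DyadicSq, treeWeight lam (dtree I K) * treeWeight lam (dtree K J)
      ≤ treeWeight mu (dtree I J) * treeWeight 3 (dtree I K) := by
    intro K
    set a := dtree I K with ha
    set b := dtree K J with hb
    calc treeWeight lam a * treeWeight lam b
        = (treeWeight mu a * treeWeight mu b) *
            (treeWeight (lam - mu) a * treeWeight (lam - mu) b) := by
          rw [SchurAux.treeWeight_split lam mu a, SchurAux.treeWeight_split lam mu b]
          ring
      _ ≤ treeWeight mu (dtree I J) * (treeWeight 3 a * 1) := by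
          gcongr
          · rw [← SchurAux.treeWeight_add]
            exact SchurAux.treeWeight_anti hmu (SchurAux.dtree_triangle I K J)
          · exact SchurAux.treeWeight_mono_lam (by linarith) a
          · exact SchurAux.treeWeight_le_one (by linarith) b
      _ = treeWeight mu (dtree I J) * treeWeight 3 a := by rw [mul_one]
  calc ∑' K : DyadicSq, treeWeight lam (dtree I K) * treeWeight lam (dtree K J)
      ≤ ∑' K : DyadicSq, treeWeight mu (dtree I J) * treeWeight 3 (dtree I K) :=
        ENNReal.tsum_le_tsum key
    _ = treeWeight mu (dtree I J) * ∑' K : DyadicSq, treeWeight 3 (dtree I K) :=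
        ENNReal.tsum_mul_left
    _ ≤ treeWeight mu (dtree I J) * ENNReal.ofReal 3 := by
        gcongr
        exact SchurAux.sum_W3_le I
    _ = ENNReal.ofReal 3 * treeWeight mu (dtree I J) := mul_comm _ _
end

section
/- Let κ ≥ 4 be an integer. There exist ε₀ > 0 and C > 0, depending only on κ, such that for every 0 < ε ≤ ε₀ and all dyadic squares J₀ and K₀ in ℝ², Σ_{n=1}^{∞} Σ_{(J₁,…,J_{n−1})} Π_{k=1}^{n} ε · 2^{-κ · dtree(J_{k−1}, J_k)} ≤ C ε · 2^{-(κ−3) · dtree(J₀, K₀)}, where for each n the inner sum runs over all chains of dyadic squares J₁, …, J_{n−1} with J_n = K₀ and J_{k−1} ≠ J_k for 1 ≤ k ≤ n. -/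
/-!
Write `2^{-κd} = 2^{-(κ-3)d} · 2^{-3d}`. Along a chain from `J₀` to `K₀` the first factors
multiply to at most `2^{-(κ-3) d(J₀,K₀)}` by the triangle inequality. The second factors sum, over
chains of length `n + 1`, to at most `3^n`, because `∑_K 2^{-3 d(J,K)} ≤ 3` for every `J`: a
geodesic from `J` is a word in five moves (to the parent or to one of four children), so this sum
is at most `∑ₙ 5ⁿ 8⁻ⁿ = 8/3`. For `ε ≤ 1/6` the series over `n` is then at most
`ε ∑ₙ (3ε)ⁿ ≤ 2ε` times `2^{-(κ-3) d(J₀,K₀)}`.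
-/

open scoped ENNReal

lemma treeWeight_top (a : ℝ) : treeWeight a ⊤ = 0 := if_pos rfl

lemma treeWeight_coe (a : ℝ) (d : ℕ) :
    treeWeight a d = ENNReal.ofReal (2 ^ (-a)) ^ d := by
  rw [treeWeight, if_neg (ENat.natCast_ne_top d), ENat.toNat_natCast,
    ← ENNReal.ofReal_pow (by positivity), ← Real.rpow_mul_natCast (by norm_num), neg_mul]

lemma treeWeight_zero (a : ℝ) : treeWeight a 0 = 1 := by
  simpa using treeWeight_coe a 0

lemma treeWeight_add (a : ℝ) (d e : ℕ∞) :
    treeWeight a (d + e) = treeWeight a d * treeWeight a e := by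
  induction d using ENat.recTopCoe with
  | top => simp [treeWeight_top]
  | coe d =>
    induction e using ENat.recTopCoe with
    | top => simp [treeWeight_top]
    | coe e => rw [← Nat.cast_add, treeWeight_coe, treeWeight_coe, treeWeight_coe, pow_add]

lemma treeWeight_sum (a : ℝ) {ι : Type*} (s : Finset ι) (d : ι → ℕ∞) :
    treeWeight a (∑ i ∈ s, d i) = ∏ i ∈ s, treeWeight a (d i) := by
  induction s using Finset.cons_induction with
  | empty => simp [treeWeight_zero]
  | cons i s hi ih => rw [Finset.sum_cons, Finset.prod_cons, treeWeight_add, ih]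

lemma treeWeight_add_lam (a b : ℝ) (d : ℕ∞) :
    treeWeight (a + b) d = treeWeight a d * treeWeight b d := by
  induction d using ENat.recTopCoe with
  | top => simp [treeWeight_top]
  | coe d =>
    rw [treeWeight_coe, treeWeight_coe, treeWeight_coe, ← mul_pow,
      ← ENNReal.ofReal_mul (by positivity), ← Real.rpow_add two_pos, neg_add]

lemma treeWeight_antitone {a : ℝ} (ha : 0 ≤ a) : Antitone (treeWeight a) := by
  intro d e hde
  induction e using ENat.recTopCoe with
  | top => simp [treeWeight_top]
  | coe e =>
    lift d to ℕ using ne_top_of_le_ne_top (ENat.natCast_ne_top e) hde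
    rw [treeWeight_coe, treeWeight_coe]
    refine pow_le_pow_right_of_le_one' ?_ (by exact_mod_cast hde)
    exact ENNReal.ofReal_le_one.2 (Real.rpow_le_one_of_one_le_of_nonpos one_le_two (by linarith))

lemma treeWeight_le_one {a : ℝ} (ha : 0 ≤ a) (d : ℕ∞) : treeWeight a d ≤ 1 :=
  (treeWeight_antitone ha zero_le).trans_eq (treeWeight_zero a)

lemma treeWeight_three (d : ℕ) : treeWeight 3 d = 8⁻¹ ^ d := by
  rw [treeWeight_coe, Real.rpow_neg two_pos.le, ENNReal.ofReal_inv_of_pos (by positivity)]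
  norm_num

def dyadicTree : SimpleGraph DyadicSq := SimpleGraph.fromRel fun I J => parentSq I = J

lemma parentSq_ne (I : DyadicSq) : parentSq I ≠ I := fun h => by
  have := congrArg Prod.fst h
  simp [parentSq] at this

lemma dyadicTree_adj {I J : DyadicSq} : dyadicTree.Adj I J ↔ adjSq I J := by
  refine ⟨fun h => h.2, fun h => ⟨?_, h⟩⟩
  rintro rfl
  exact h.elim (parentSq_ne I) (parentSq_ne I)

lemma chainSq_of_walk {I J : DyadicSq} (w : dyadicTree.Walk I J) :
    chainSq w.length I J :=
  ⟨w.getVert, w.getVert_zero, w.getVert_length,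
    fun _ hk => dyadicTree_adj.1 (w.adj_getVert_succ hk)⟩

lemma exists_walk_of_chainSq {n : ℕ} : ∀ {I J : DyadicSq}, chainSq n I J →
    ∃ w : dyadicTree.Walk I J, w.length = n := by
  induction n with
  | zero =>
    rintro I J ⟨c, rfl, rfl, -⟩
    exact ⟨.nil, rfl⟩
  | succ n ih =>
    rintro I J ⟨c, rfl, rfl, hc⟩
    obtain ⟨w, hw⟩ := ih ⟨fun k => c (k + 1), rfl, rfl, fun k hk => hc (k + 1) (by omega)⟩
    exact ⟨.cons (dyadicTree_adj.2 (hc 0 n.succ_pos)) w, by simp [hw]⟩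

lemma dtree_eq_edist (I J : DyadicSq) : dtree I J = dyadicTree.edist I J := by
  refine le_antisymm (le_iInf fun w => iInf₂_le w.length (chainSq_of_walk w))
    (le_iInf₂ fun n h => ?_)
  obtain ⟨w, rfl⟩ := exists_walk_of_chainSq h
  exact SimpleGraph.edist_le w

lemma SimpleGraph.edist_le_sum_edist_fin {V : Type*} (G : SimpleGraph V) :
    ∀ {n : ℕ} (c : Fin (n + 1) → V),
      G.edist (c 0) (c (Fin.last n)) ≤ ∑ k : Fin n, G.edist (c k.castSucc) (c k.succ)
  | 0, c => by simp
  | n + 1, c => by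
    have ih := G.edist_le_sum_edist_fin (fun k => c k.castSucc)
    simp only [Fin.castSucc_zero, ← Fin.succ_castSucc] at ih
    rw [Fin.sum_univ_castSucc, ← Fin.succ_last]
    exact G.edist_triangle.trans (by gcongr)

lemma prod_treeWeight_dtree_le {a : ℝ} (ha : 0 ≤ a) {n : ℕ} (c : Fin (n + 1) → DyadicSq) :
    ∏ k : Fin n, treeWeight a (dtree (c k.castSucc) (c k.succ)) ≤
      treeWeight a (dtree (c 0) (c (Fin.last n))) := by
  rw [← treeWeight_sum]
  refine treeWeight_antitone ha ?_
  simpa only [dtree_eq_edist] using dyadicTree.edist_le_sum_edist_fin c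

def stepSq (I : DyadicSq) : Option (Fin 2 → Bool) → DyadicSq
  | none => parentSq I
  | some b => (I.1 + 1, fun j => 2 * I.2 j + if b j then 1 else 0)

lemma exists_stepSq_eq {I J : DyadicSq} (h : adjSq I J) : ∃ s, stepSq I s = J := by
  rcases h with h | h
  · exact ⟨none, h⟩
  refine ⟨some fun j => J.2 j % 2 = 1, Prod.ext ?_ (funext fun j => ?_)⟩
  · have : J.1 - 1 = I.1 := congrArg Prod.fst h
    simp only [stepSq]
    omega
  · have : J.2 j / 2 = I.2 j := congrFun (congrArg Prod.snd h) j
    simp only [stepSq, decide_eq_true_eq]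
    split_ifs <;> omega

lemma exists_moves_of_walk {I J : DyadicSq} (w : dyadicTree.Walk I J) :
    ∃ L : List (Option (Fin 2 → Bool)), L.length = w.length ∧ L.foldl stepSq I = J := by
  induction w with
  | nil => exact ⟨[], rfl, rfl⟩
  | cons h _ ih =>
    obtain ⟨L, hL, hLJ⟩ := ih
    obtain ⟨s, rfl⟩ := exists_stepSq_eq (dyadicTree_adj.1 h)
    exact ⟨s :: L, by simp [hL], hLJ⟩

lemma ENNReal.tsum_le_tsum_of_exists_preimage {α β : Type*} {f : α → ℝ≥0∞} {g : β → ℝ≥0∞}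
    (π : β → α) (h : ∀ a, f a ≠ 0 → ∃ b, π b = a ∧ f a ≤ g b) : ∑' a, f a ≤ ∑' b, g b := by
  choose φ hπφ hφ using fun a : Function.support f => h a a.2
  have hφinj : φ.Injective := fun a a' haa' => Subtype.ext (by rw [← hπφ a, ← hπφ a', haa'])
  rw [← tsum_subtype_eq_of_support_subset subset_rfl]
  exact (ENNReal.tsum_le_tsum hφ).trans (ENNReal.tsum_comp_le_tsum_of_injective hφinj g)

lemma ENNReal.tsum_pow_length {M : Type*} [Fintype M] (r : ℝ≥0∞) :
    ∑' L : List M, r ^ L.length = ∑' n : ℕ, (Fintype.card M * r) ^ n := by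
  rw [← List.equivSigmaTuple.symm.tsum_eq, ENNReal.tsum_sigma']
  refine tsum_congr fun n => ?_
  simp [List.equivSigmaTuple, mul_pow]

lemma tsum_treeWeight_three_dtree_le (J : DyadicSq) :
    ∑' K, treeWeight 3 (dtree J K) ≤ 3 := by
  have hencode : ∀ K, treeWeight 3 (dtree J K) ≠ 0 →
      ∃ L : List (Option (Fin 2 → Bool)), L.foldl stepSq J = K ∧
        treeWeight 3 (dtree J K) ≤ 8⁻¹ ^ L.length := by
    intro K hK
    have hfin : dyadicTree.edist J K ≠ ⊤ := by
      rintro htop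
      rw [dtree_eq_edist, htop, treeWeight_top] at hK
      exact hK rfl
    obtain ⟨w, hw⟩ := SimpleGraph.exists_walk_of_edist_ne_top hfin
    obtain ⟨L, hL, hLK⟩ := exists_moves_of_walk w
    exact ⟨L, hLK, by rw [dtree_eq_edist, ← hw, ← hL, treeWeight_three]⟩
  calc ∑' K, treeWeight 3 (dtree J K)
      ≤ ∑' L : List (Option (Fin 2 → Bool)), 8⁻¹ ^ L.length :=
        ENNReal.tsum_le_tsum_of_exists_preimage _ hencode
    _ = ∑' n : ℕ, (5 * 8⁻¹) ^ n := by rw [ENNReal.tsum_pow_length]; simp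
    _ ≤ 3 := by
        have h58 : (5 * 8⁻¹ : ℝ≥0∞) = ENNReal.ofReal (5 / 8) := by
          rw [ENNReal.ofReal_div_of_pos (by norm_num)]
          simp [div_eq_mul_inv]
        rw [ENNReal.tsum_geometric, h58, ← ENNReal.ofReal_one, ← ENNReal.ofReal_sub _ (by norm_num),
          ← ENNReal.ofReal_inv_of_pos (by norm_num)]
        norm_num

lemma tsum_chain_prod_le_pow {α : Type*} (g : α → α → ℝ≥0∞) {B : ℝ≥0∞} (hg : ∀ I J, g I J ≤ 1)
    (hB : ∀ I, ∑' J, g I J ≤ B) :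
    ∀ (n : ℕ) (J₀ K₀ : α),
      ∑' c : {c : Fin (n + 2) → α // c 0 = J₀ ∧ c (Fin.last (n + 1)) = K₀},
        ∏ k : Fin (n + 1), g (c.1 k.castSucc) (c.1 k.succ) ≤ B ^ n
  | 0, J₀, K₀ => by
    have hsub : Function.Injective fun _ : {c : Fin 2 → α // c 0 = J₀ ∧ c 1 = K₀} => () := by
      rintro ⟨c, hc0, hc1⟩ ⟨c', hc0', hc1'⟩ -
      ext i
      fin_cases i <;> simp [hc0, hc1, hc0', hc1']
    calc _ ≤ ∑' _ : {c : Fin 2 → α // c 0 = J₀ ∧ c 1 = K₀}, (1 : ℝ≥0∞) :=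
          ENNReal.tsum_le_tsum fun c => Finset.prod_le_one' fun k _ => hg _ _
      _ ≤ ∑' _ : Unit, 1 := ENNReal.tsum_comp_le_tsum_of_injective hsub fun _ => 1
      _ = B ^ 0 := by simp
  | n + 1, J₀, K₀ => by
    let tail (c : {c : Fin (n + 3) → α // c 0 = J₀ ∧ c (Fin.last (n + 2)) = K₀}) :
        Σ J₁, {c : Fin (n + 2) → α // c 0 = J₁ ∧ c (Fin.last (n + 1)) = K₀} :=
      ⟨c.1 1, Fin.tail c.1, rfl, by simpa [Fin.tail, Fin.succ_last] using c.2.2⟩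
    have htail : tail.Injective := by
      intro c c' h
      have : Fin.tail c.1 = Fin.tail c'.1 := congrArg (fun p => p.2.1) h
      rw [Subtype.ext_iff, ← Fin.cons_self_tail c.1, ← Fin.cons_self_tail c'.1, this, c.2.1, c'.2.1]
    calc _ = ∑' c, g J₀ (tail c).1 *
            ∏ k : Fin (n + 1), g ((tail c).2.1 k.castSucc) ((tail c).2.1 k.succ) := by
          refine tsum_congr fun c => ?_
          rw [Fin.prod_univ_succ]
          simp only [tail, Fin.tail, Fin.castSucc_zero, Fin.succ_zero_eq_one, c.2.1,
            Fin.succ_castSucc]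
      _ ≤ ∑' p : Σ J₁, {c : Fin (n + 2) → α // c 0 = J₁ ∧ c (Fin.last (n + 1)) = K₀},
            g J₀ p.1 * ∏ k : Fin (n + 1), g (p.2.1 k.castSucc) (p.2.1 k.succ) :=
          ENNReal.tsum_comp_le_tsum_of_injective htail _
      _ = ∑' J₁, g J₀ J₁ * ∑' c : {c : Fin (n + 2) → α // c 0 = J₁ ∧ c (Fin.last (n + 1)) = K₀},
            ∏ k : Fin (n + 1), g (c.1 k.castSucc) (c.1 k.succ) := by
          simp only [ENNReal.tsum_sigma', ENNReal.tsum_mul_left]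
      _ ≤ ∑' J₁, g J₀ J₁ * B ^ n := by
          gcongr with J₁
          exact tsum_chain_prod_le_pow g hg hB n J₁ K₀
      _ ≤ B ^ (n + 1) := by
          rw [ENNReal.tsum_mul_right, pow_succ']
          gcongr
          exact hB J₀

lemma tsum_neumann_term_le {lam : ℝ} (hlam : 3 ≤ lam) (e : ℝ≥0∞) (n : ℕ) (J₀ K₀ : DyadicSq) :
    ∑' c : {c : Fin (n + 2) → DyadicSq //
        c 0 = J₀ ∧ c (Fin.last (n + 1)) = K₀ ∧ ∀ k : Fin (n + 1), c k.castSucc ≠ c k.succ},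
      ∏ k : Fin (n + 1), e * treeWeight lam (dtree (c.1 k.castSucc) (c.1 k.succ))
    ≤ e ^ (n + 1) * 3 ^ n * treeWeight (lam - 3) (dtree J₀ K₀) := by
  let term (c : Fin (n + 2) → DyadicSq) : ℝ≥0∞ :=
    ∏ k : Fin (n + 1), e * treeWeight lam (dtree (c k.castSucc) (c k.succ))
  have hweight (d : ℕ∞) : treeWeight lam d = treeWeight (lam - 3) d * treeWeight 3 d := by
    rw [← treeWeight_add_lam, sub_add_cancel]
  have hsplit (c : Fin (n + 2) → DyadicSq) : term c = e ^ (n + 1) *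
      (∏ k : Fin (n + 1), treeWeight (lam - 3) (dtree (c k.castSucc) (c k.succ))) *
      ∏ k : Fin (n + 1), treeWeight 3 (dtree (c k.castSucc) (c k.succ)) := by
    simp only [term, Finset.prod_mul_distrib, hweight, Finset.prod_const, Finset.card_univ,
      Fintype.card_fin, mul_assoc]
  calc ∑' c : {c : Fin (n + 2) → DyadicSq //
          c 0 = J₀ ∧ c (Fin.last (n + 1)) = K₀ ∧ ∀ k : Fin (n + 1), c k.castSucc ≠ c k.succ},
        term c.1
      ≤ ∑' c : {c : Fin (n + 2) → DyadicSq // c 0 = J₀ ∧ c (Fin.last (n + 1)) = K₀}, term c.1 :=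
        ENNReal.tsum_mono_subtype term fun c hc => ⟨hc.1, hc.2.1⟩
    _ ≤ ∑' c : {c : Fin (n + 2) → DyadicSq // c 0 = J₀ ∧ c (Fin.last (n + 1)) = K₀},
          e ^ (n + 1) * treeWeight (lam - 3) (dtree J₀ K₀) *
            ∏ k : Fin (n + 1), treeWeight 3 (dtree (c.1 k.castSucc) (c.1 k.succ)) := by
        gcongr with c
        have hchain := prod_treeWeight_dtree_le (a := lam - 3) (by linarith) c.1
        rw [c.2.1, c.2.2] at hchain
        rw [hsplit]
        gcongr
    _ ≤ e ^ (n + 1) * treeWeight (lam - 3) (dtree J₀ K₀) * 3 ^ n := by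
        rw [ENNReal.tsum_mul_left]
        gcongr
        exact tsum_chain_prod_le_pow _ (fun _ _ => treeWeight_le_one (by norm_num) _)
          tsum_treeWeight_three_dtree_le n J₀ K₀
    _ = e ^ (n + 1) * 3 ^ n * treeWeight (lam - 3) (dtree J₀ K₀) := by ring

theorem neumann_chain_sum_estimate (κ : ℕ) (hκ : 4 ≤ κ) :
    ∃ ε₀ : ℝ, 0 < ε₀ ∧ ∃ C : ℝ, 0 < C ∧
      ∀ ε : ℝ, 0 < ε → ε ≤ ε₀ → ∀ J₀ K₀ : DyadicSq,
        ∑' n : ℕ,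
          ∑' c : {c : Fin (n + 2) → DyadicSq //
              c 0 = J₀ ∧ c (Fin.last (n + 1)) = K₀ ∧
              ∀ k : Fin (n + 1), c k.castSucc ≠ c k.succ},
            ∏ k : Fin (n + 1),
              ENNReal.ofReal ε * treeWeight (κ : ℝ) (dtree (c.1 k.castSucc) (c.1 k.succ))
          ≤ ENNReal.ofReal (C * ε) * treeWeight ((κ : ℝ) - 3) (dtree J₀ K₀) := by
  refine ⟨1 / 6, by norm_num, 2, two_pos, fun ε _ hε J₀ K₀ => ?_⟩
  set e := ENNReal.ofReal ε
  set W := treeWeight ((κ : ℝ) - 3) (dtree J₀ K₀)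
  have hκ3 : (3 : ℝ) ≤ κ := by exact_mod_cast (by omega : 3 ≤ κ)
  have he : e * 3 ≤ 2⁻¹ := by
    rw [← ENNReal.ofReal_ofNat 3, ← ENNReal.ofReal_mul' (by norm_num), ← ENNReal.ofReal_ofNat 2,
      ← ENNReal.ofReal_inv_of_pos two_pos]
    exact ENNReal.ofReal_le_ofReal (by linarith)
  calc _ ≤ ∑' n : ℕ, e ^ (n + 1) * 3 ^ n * W :=
        ENNReal.tsum_le_tsum fun n => tsum_neumann_term_le hκ3 e n J₀ K₀
    _ = e * W * ∑' n : ℕ, (e * 3) ^ n := by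
        rw [← ENNReal.tsum_mul_left]
        congr 1 with n
        ring
    _ ≤ e * W * ∑' n : ℕ, 2⁻¹ ^ n := by gcongr
    _ = ENNReal.ofReal (2 * ε) * W := by
        rw [ENNReal.tsum_geometric, ENNReal.one_sub_inv_two, inv_inv,
          ENNReal.ofReal_mul zero_le_two, ENNReal.ofReal_ofNat]
        ring
end
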